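/- Majority advantage for odd groups under the explicit bounded-rational report structure: let q_0 = 1/(2+2e^5) + 1/(2+2e) and q_1 = 1/(1+e). Then for every odd integer n ≥ 3, Σ_{x=0}^{(n−1)/2} C(n,x) · ( (1/2)·q_1^{n−x}(1−q_1)^{x} − (3/2)·q_0^{n−x}(1−q_0)^{x} ) > 0; equivalently, the majority-voting utility 1/2 + Σ_{x=0}^{(n−1)/2} C(n,x)·((1/2) q_1^{n−x}(1−q_1)^x − (3/2) q_0^{n−x}(1−q_0)^x) under the report structure with prior μ = 1/4 and i.i.d. reports Pr[X_i=1|ω=1] = q_1, Pr[X_i=1|ω=0] = q_0 is strictly greater than 1/2. -/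
import Mathlib


open Real Finset

/-- Majority voting `f^maj` for `n` experts. -/
noncomputable def fmaj (n : ℕ) : ℕ → ℝ := fun x =>
  if 2 * x < n then 0 else if 2 * x = n then 1 / 2 else 1

/-- `q₀ = 1/(2+2e⁵) + 1/(2+2e)`: the probability that a bounded-rational expert
reports `1` when `ω = 0` in the explicit report structure. -/
noncomputable def q0star : ℝ := 1 / (2 + 2 * Real.exp 5) + 1 / (2 + 2 * Real.exp 1)

/-- `q₁ = 1/(1+e)`: the probability that a bounded-rational expert reports `1`
when `ω = 1` in the explicit report structure. -/
noncomputable def q1star : ℝ := 1 / (1 + Real.exp 1)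

lemma q1_bounds : (0.2689414 : ℝ) < q1star ∧ q1star < 0.2689415 := by
  have h1 := Real.exp_one_gt_d9
  have h2 := Real.exp_one_lt_d9
  have hpos : (0:ℝ) < 1 + Real.exp 1 := by nlinarith
  unfold q1star
  constructor
  · rw [lt_div_iff₀ hpos]; nlinarith
  · rw [div_lt_iff₀ hpos]; nlinarith

lemma q0_bounds : (0.1378171 : ℝ) < q0star ∧ q0star < 0.1378172 := by
  have h1 := Real.exp_one_gt_d9
  have h2 := Real.exp_one_lt_d9
  have h5 : Real.exp 5 = Real.exp 1 ^ 5 := by rw [← Real.exp_nat_mul]; norm_num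
  have h5l : (148.4131590 : ℝ) < Real.exp 5 := by
    rw [h5]
    have := pow_lt_pow_left₀ h1 (by norm_num) (n := 5) (by norm_num)
    nlinarith [this]
  have h5u : Real.exp 5 < (148.4131592 : ℝ) := by
    rw [h5]
    have := pow_lt_pow_left₀ h2 (le_of_lt (Real.exp_pos 1)) (n := 5) (by norm_num)
    nlinarith [this]
  have hp1 : (0:ℝ) < 2 + 2 * Real.exp 5 := by nlinarith
  have hp2 : (0:ℝ) < 2 + 2 * Real.exp 1 := by nlinarith
  unfold q0star
  constructor
  · have a1 : (1:ℝ)/298.8263184 < 1/(2 + 2*Real.exp 5) := by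
      rw [div_lt_div_iff₀ (by norm_num) hp1]; nlinarith
    have a2 : (1:ℝ)/7.4365636572 < 1/(2 + 2*Real.exp 1) := by
      rw [div_lt_div_iff₀ (by norm_num) hp2]; nlinarith
    nlinarith [add_lt_add a1 a2]
  · have a1 : (1:ℝ)/(2 + 2*Real.exp 5) < 1/298.8263180 := by
      rw [div_lt_div_iff₀ hp1 (by norm_num)]; nlinarith
    have a2 : (1:ℝ)/(2 + 2*Real.exp 1) < 1/7.4365636566 := by
      rw [div_lt_div_iff₀ hp2 (by norm_num)]; nlinarith
    nlinarith [add_lt_add a1 a2]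

lemma keyfacts :
    0 < q0star ∧ q0star < q1star ∧ q1star < 1 ∧
    3 * q0star ^ 3 < q1star ^ 3 ∧
    3 * (q0star ^ 2 * (1 - q0star)) < q1star ^ 2 * (1 - q1star) ∧
    0 < q0star * (1 - q0star) ∧
    q0star * (1 - q0star) < q1star * (1 - q1star) := by
  obtain ⟨a, b⟩ := q1_bounds
  obtain ⟨c, d⟩ := q0_bounds
  have h0 : (0:ℝ) < q0star := by nlinarith
  have hsq1 : (0.2689414:ℝ)^2 < q1star^2 := by nlinarith
  have hsq0 : q0star^2 < (0.1378172:ℝ)^2 := by nlinarith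
  have hc1 : (0.2689414:ℝ)^2 * (1 - 0.2689415) < q1star^2 * (1 - q1star) := by nlinarith
  have hc0 : q0star^2 * (1 - q0star) < (0.1378172:ℝ)^2 * (1 - 0.1378171) := by nlinarith
  have hq13 : (0.2689414:ℝ)^3 < q1star^3 := by nlinarith
  have hq03 : q0star^3 < (0.1378172:ℝ)^3 := by nlinarith
  exact ⟨h0, by nlinarith, by nlinarith, by nlinarith, by nlinarith, by nlinarith, by nlinarith⟩

/-- The key power inequality: for `k ≥ 1` (and `k ≥ 3` if `j = 0`),
`3·q₀ᵏ(q₀(1−q₀))ʲ < q₁ᵏ(q₁(1−q₁))ʲ`. -/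
lemma power_ineq (k j : ℕ) (hk : 1 ≤ k) (h3 : j = 0 → 3 ≤ k) :
    3 * (q0star ^ k * (q0star * (1 - q0star)) ^ j)
      < q1star ^ k * (q1star * (1 - q1star)) ^ j := by
  obtain ⟨h0, h01, h1lt, hcube, hF3, hPpos, hP⟩ := keyfacts
  rcases Nat.eq_zero_or_pos j with hj | hj
  · subst hj
    obtain ⟨t, rfl⟩ : ∃ t, k = 3 + t := ⟨k - 3, by omega⟩
    simp only [pow_zero, mul_one]
    have ht : q0star ^ t ≤ q1star ^ t := pow_le_pow_left₀ h0.le h01.le t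
    have htpos : (0:ℝ) < q0star ^ t := pow_pos h0 t
    calc 3 * q0star ^ (3 + t) = (3 * q0star ^ 3) * q0star ^ t := by rw [pow_add]; ring
      _ < q1star ^ 3 * q0star ^ t := by exact mul_lt_mul_of_pos_right hcube htpos
      _ ≤ q1star ^ 3 * q1star ^ t := by
          have hq1pos : (0:ℝ) < q1star := h0.trans h01
          exact mul_le_mul_of_nonneg_left ht (pow_pos hq1pos 3).le
      _ = q1star ^ (3 + t) := by rw [pow_add]
  · obtain ⟨j', rfl⟩ : ∃ j', j = j' + 1 := ⟨j - 1, by omega⟩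
    obtain ⟨k', rfl⟩ : ∃ k', k = k' + 1 := ⟨k - 1, by omega⟩
    have ht : q0star ^ k' ≤ q1star ^ k' := pow_le_pow_left₀ h0.le h01.le k'
    have hPt : (q0star * (1 - q0star)) ^ j' ≤ (q1star * (1 - q1star)) ^ j' :=
      pow_le_pow_left₀ hPpos.le hP.le j'
    have hA : (0:ℝ) < q0star ^ k' * (q0star * (1 - q0star)) ^ j' := by positivity
    have hqP : 3 * (q0star * (q0star * (1 - q0star))) < q1star * (q1star * (1 - q1star)) := by
      nlinarith [hF3]
    have h1pos : (0:ℝ) < q1star * (q1star * (1 - q1star)) := by nlinarith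
    calc 3 * (q0star ^ (k' + 1) * (q0star * (1 - q0star)) ^ (j' + 1))
        = (3 * (q0star * (q0star * (1 - q0star)))) *
            (q0star ^ k' * (q0star * (1 - q0star)) ^ j') := by ring
      _ < (q1star * (q1star * (1 - q1star))) *
            (q0star ^ k' * (q0star * (1 - q0star)) ^ j') :=
          mul_lt_mul_of_pos_right hqP hA
      _ ≤ (q1star * (q1star * (1 - q1star))) *
            (q1star ^ k' * (q1star * (1 - q1star)) ^ j') := by
          have hq1pos : (0:ℝ) < q1star := h0.trans h01
          apply mul_le_mul_of_nonneg_left _ h1pos.le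
          exact mul_le_mul ht hPt (pow_nonneg hPpos.le j') (pow_nonneg hq1pos.le k')
      _ = q1star ^ (k' + 1) * (q1star * (1 - q1star)) ^ (j' + 1) := by ring

lemma binom_full (p : ℝ) (n : ℕ) :
    ∑ x ∈ range (n + 1), (n.choose x : ℝ) * p ^ x * (1 - p) ^ (n - x) = 1 := by
  have h : (1:ℝ) = ∑ k ∈ range (n + 1), p ^ k * (1 - p) ^ (n - k) * (n.choose k : ℝ) := by
    rw [← add_pow]; norm_num
  have h2 : ∑ x ∈ range (n + 1), (n.choose x : ℝ) * p ^ x * (1 - p) ^ (n - x)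
      = ∑ k ∈ range (n + 1), p ^ k * (1 - p) ^ (n - k) * (n.choose k : ℝ) :=
    Finset.sum_congr rfl fun x _ => by ring
  rw [h2]; exact h.symm

lemma reflect_sum (p : ℝ) (m : ℕ) :
    ∑ x ∈ Ico (m + 1) (2 * m + 2), ((2 * m + 1).choose x : ℝ) * p ^ x * (1 - p) ^ (2 * m + 1 - x)
      = ∑ x ∈ range (m + 1), ((2 * m + 1).choose x : ℝ) * p ^ (2 * m + 1 - x) * (1 - p) ^ x := by
  apply Finset.sum_nbij' (fun x => 2 * m + 1 - x) (fun y => 2 * m + 1 - y)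
  · intro x hx; simp only [mem_Ico] at hx; simp only [mem_range]; omega
  · intro y hy; simp only [mem_range] at hy; simp only [mem_Ico]; omega
  · intro x hx; simp only [mem_Ico] at hx; omega
  · intro y hy; simp only [mem_range] at hy; omega
  · intro x hx
    simp only [mem_Ico] at hx
    have h1 : x ≤ 2 * m + 1 := by omega
    have e1 : 2 * m + 1 - (2 * m + 1 - x) = x := by omega
    rw [e1, Nat.choose_symm h1]

lemma sum_fmaj (p : ℝ) (m : ℕ) :
    ∑ x ∈ range (2 * m + 2),
        (2 * fmaj (2 * m + 1) x - 1) * (((2 * m + 1).choose x : ℝ) * p ^ x * (1 - p) ^ (2 * m + 1 - x))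
      = -1 + 2 * ∑ x ∈ range (m + 1), ((2 * m + 1).choose x : ℝ) * p ^ (2 * m + 1 - x) * (1 - p) ^ x := by
  have hsplit := Finset.sum_range_add_sum_Ico
    (fun x => (2 * fmaj (2 * m + 1) x - 1) * (((2 * m + 1).choose x : ℝ) * p ^ x * (1 - p) ^ (2 * m + 1 - x)))
    (show m + 1 ≤ 2 * m + 2 by omega)
  have hsplit2 := Finset.sum_range_add_sum_Ico
    (fun x => (((2 * m + 1).choose x : ℝ) * p ^ x * (1 - p) ^ (2 * m + 1 - x)))
    (show m + 1 ≤ 2 * m + 2 by omega)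
  have hlow : ∑ x ∈ range (m + 1),
      (2 * fmaj (2 * m + 1) x - 1) * (((2 * m + 1).choose x : ℝ) * p ^ x * (1 - p) ^ (2 * m + 1 - x))
      = -∑ x ∈ range (m + 1), (((2 * m + 1).choose x : ℝ) * p ^ x * (1 - p) ^ (2 * m + 1 - x)) := by
    rw [← Finset.sum_neg_distrib]
    refine Finset.sum_congr rfl fun x hx => ?_
    simp only [mem_range] at hx
    have h : 2 * x < 2 * m + 1 := by omega
    simp [fmaj, h]
  have hhigh : ∑ x ∈ Ico (m + 1) (2 * m + 2),
      (2 * fmaj (2 * m + 1) x - 1) * (((2 * m + 1).choose x : ℝ) * p ^ x * (1 - p) ^ (2 * m + 1 - x))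
      = ∑ x ∈ Ico (m + 1) (2 * m + 2), (((2 * m + 1).choose x : ℝ) * p ^ x * (1 - p) ^ (2 * m + 1 - x)) := by
    refine Finset.sum_congr rfl fun x hx => ?_
    simp only [mem_Ico] at hx
    have h1 : ¬ (2 * x < 2 * m + 1) := by omega
    have h2 : ¬ (2 * x = 2 * m + 1) := by omega
    simp only [fmaj, h1, h2, if_false]
    ring
  have hfull : ∑ x ∈ range (2 * m + 2),
      (((2 * m + 1).choose x : ℝ) * p ^ x * (1 - p) ^ (2 * m + 1 - x)) = 1 := binom_full p (2 * m + 1)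
  have hrefl := reflect_sum p m
  linarith [hsplit, hsplit2, hlow, hhigh, hfull, hrefl]

/-- **Majority advantage for odd groups under the explicit bounded-rational report
structure.** For every odd `n ≥ 3`,
`Σ_{x=0}^{(n−1)/2} C(n,x)·((1/2)q₁^{n−x}(1−q₁)^x − (3/2)q₀^{n−x}(1−q₀)^x) > 0`;
equivalently, the majority-voting utility under the report structure with prior
`μ = 1/4` and i.i.d. reports `Pr[X_i=1|ω=1] = q₁`, `Pr[X_i=1|ω=0] = q₀` is strictly
greater than `1/2`. -/
theorem majority_advantage_odd (n : ℕ) (hn : 3 ≤ n) (hodd : Odd n) :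
    0 < ∑ x ∈ Finset.range ((n - 1) / 2 + 1),
        (n.choose x : ℝ) *
          (1 / 2 * q1star ^ (n - x) * (1 - q1star) ^ x -
            3 / 2 * q0star ^ (n - x) * (1 - q0star) ^ x) ∧
      1 / 2 < ∑ x ∈ Finset.range (n + 1),
        (2 * fmaj n x - 1) *
          (1 / 4 * (n.choose x : ℝ) * q1star ^ x * (1 - q1star) ^ (n - x) -
            3 / 4 * (n.choose x : ℝ) * q0star ^ x * (1 - q0star) ^ (n - x)) := by
  obtain ⟨m, rfl⟩ := hodd
  have hm : 1 ≤ m := by omega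
  have hd : (2 * m + 1 - 1) / 2 = m := by omega
  rw [hd]
  -- the key sum S
  set S := ∑ x ∈ Finset.range (m + 1),
      ((2 * m + 1).choose x : ℝ) *
        (1 / 2 * q1star ^ (2 * m + 1 - x) * (1 - q1star) ^ x -
          3 / 2 * q0star ^ (2 * m + 1 - x) * (1 - q0star) ^ x) with hSdef
  have hterm : ∀ x ∈ Finset.range (m + 1),
      0 < ((2 * m + 1).choose x : ℝ) *
        (1 / 2 * q1star ^ (2 * m + 1 - x) * (1 - q1star) ^ x -
          3 / 2 * q0star ^ (2 * m + 1 - x) * (1 - q0star) ^ x) := by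
    intro x hx
    simp only [mem_range] at hx
    have hxle : x ≤ 2 * m + 1 := by omega
    have hCpos : (0:ℝ) < ((2 * m + 1).choose x : ℝ) := by
      exact_mod_cast Nat.choose_pos hxle
    have hk1 : 1 ≤ 2 * m + 1 - 2 * x := by omega
    have hk3 : x = 0 → 3 ≤ 2 * m + 1 - 2 * x := by omega
    have hpi := power_ineq (2 * m + 1 - 2 * x) x hk1 hk3
    have e1 : q1star ^ (2 * m + 1 - x) * (1 - q1star) ^ x
        = q1star ^ (2 * m + 1 - 2 * x) * (q1star * (1 - q1star)) ^ x := by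
      rw [show 2 * m + 1 - x = (2 * m + 1 - 2 * x) + x by omega, pow_add, mul_pow]; ring
    have e0 : q0star ^ (2 * m + 1 - x) * (1 - q0star) ^ x
        = q0star ^ (2 * m + 1 - 2 * x) * (q0star * (1 - q0star)) ^ x := by
      rw [show 2 * m + 1 - x = (2 * m + 1 - 2 * x) + x by omega, pow_add, mul_pow]; ring
    have hinner : 0 < 1 / 2 * q1star ^ (2 * m + 1 - x) * (1 - q1star) ^ x -
        3 / 2 * q0star ^ (2 * m + 1 - x) * (1 - q0star) ^ x := by
      have l1 : 1 / 2 * q1star ^ (2 * m + 1 - x) * (1 - q1star) ^ x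
          = 1 / 2 * (q1star ^ (2 * m + 1 - 2 * x) * (q1star * (1 - q1star)) ^ x) := by
        rw [mul_assoc, e1]
      have l0 : 3 / 2 * q0star ^ (2 * m + 1 - x) * (1 - q0star) ^ x
          = 3 / 2 * (q0star ^ (2 * m + 1 - 2 * x) * (q0star * (1 - q0star)) ^ x) := by
        rw [mul_assoc, e0]
      rw [l1, l0]
      linarith
    exact mul_pos hCpos hinner
  have hS : 0 < S := Finset.sum_pos hterm ⟨0, by simp⟩
  refine ⟨hS, ?_⟩
  -- second part
  have hcongr : ∑ x ∈ Finset.range (2 * m + 1 + 1),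
      (2 * fmaj (2 * m + 1) x - 1) *
        (1 / 4 * ((2 * m + 1).choose x : ℝ) * q1star ^ x * (1 - q1star) ^ (2 * m + 1 - x) -
          3 / 4 * ((2 * m + 1).choose x : ℝ) * q0star ^ x * (1 - q0star) ^ (2 * m + 1 - x))
      = ∑ x ∈ Finset.range (2 * m + 2),
        (1 / 4 * ((2 * fmaj (2 * m + 1) x - 1) *
            (((2 * m + 1).choose x : ℝ) * q1star ^ x * (1 - q1star) ^ (2 * m + 1 - x))) -
         3 / 4 * ((2 * fmaj (2 * m + 1) x - 1) *
            (((2 * m + 1).choose x : ℝ) * q0star ^ x * (1 - q0star) ^ (2 * m + 1 - x)))) := by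
    rw [show 2 * m + 1 + 1 = 2 * m + 2 by omega]
    exact Finset.sum_congr rfl fun x _ => by ring
  rw [hcongr, Finset.sum_sub_distrib, ← Finset.mul_sum, ← Finset.mul_sum,
    sum_fmaj q1star m, sum_fmaj q0star m]
  -- identify S with the resulting sums
  have hSsplit : S = 1 / 2 * (∑ x ∈ Finset.range (m + 1),
        ((2 * m + 1).choose x : ℝ) * q1star ^ (2 * m + 1 - x) * (1 - q1star) ^ x)
      - 3 / 2 * (∑ x ∈ Finset.range (m + 1),
        ((2 * m + 1).choose x : ℝ) * q0star ^ (2 * m + 1 - x) * (1 - q0star) ^ x) := by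
    rw [hSdef, Finset.mul_sum, Finset.mul_sum, ← Finset.sum_sub_distrib]
    exact Finset.sum_congr rfl fun x _ => by ring
  linarith [hS, hSsplit]
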